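/- Fix the linear order N < E < D on steps. Let φ map a bad Delannoy path W in Del(n,n,l) to the path obtained by replacing its first deepest step with E (depth after step i = #N − #E in the first i steps). Then φ is a bijection onto Del(n+1,n-1,l) and maj(W) = maj(φ(W)) for all bad W. -/

import Mathlib

inductive Step : Type
  | E | D | N
deriving DecidableEq

instance : Fintype Step :=
  ⟨{Step.E, Step.D, Step.N}, fun x => by cases x <;> simp⟩

open Step Polynomial

/-- All words of length `l` over the step alphabet. -/
def Words (l : ℕ) : Finset (List Step) :=
  (Finset.univ : Finset (Fin l → Step)).image List.ofFn

/-- Delannoy paths from (0,0) to (m,n) with `l` steps, encoded as words: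
`#E + #D = m`, `#N + #D = n`, length `l`. -/
def DelSet (m n l : ℕ) : Finset (List Step) :=
  (Words l).filter fun w => w.count E + w.count D = m ∧ w.count N + w.count D = n

/-- A word is bad if some prefix contains more N's than E's. -/
def bad (w : List Step) : Bool :=
  (List.range (w.length + 1)).any fun k => (w.take k).count E < (w.take k).count N

/-- Bad Delannoy paths from (0,0) to (n,n) with `l` steps. -/
def BDelSet (n l : ℕ) : Finset (List Step) :=
  (DelSet n n l).filter fun w => bad w

/-- Schröder paths: Delannoy paths to (n,n) never going above the diagonal. -/
def SchSet (n l : ℕ) : Finset (List Step) :=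
  (DelSet n n l).filter fun w => ¬ bad w

/-- Major index of a word w_1 ⋯ w_l with respect to a ranking of the letters:
the sum of all positions i (1 ≤ i ≤ l-1) with w_i > w_{i+1}. -/
def maj (rank : Step → ℕ) (w : List Step) : ℕ :=
  ∑ i ∈ Finset.range (w.length - 1),
    if rank (w.getD (i + 1) E) < rank (w.getD i E) then i + 1 else 0

/-- q-integer [m] = 1 + q + ⋯ + q^{m-1}. -/
noncomputable def qint (m : ℕ) : Polynomial ℚ :=
  ∑ i ∈ Finset.range m, X ^ i

/-- q-factorial. -/
noncomputable def qfact : ℕ → Polynomial ℚ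
  | 0 => 1
  | m + 1 => qfact m * qint (m + 1)

/-- Gaussian binomial coefficient, via the q-Pascal recurrence. -/
noncomputable def qbinom : ℕ → ℕ → Polynomial ℚ
  | _, 0 => 1
  | 0, _ + 1 => 0
  | m + 1, k + 1 => qbinom m k + X ^ (k + 1) * qbinom m (k + 1)

/-- q-trinomial coefficient [l]!/([a]![b]![c]!), defined when a+b+c = l. -/
noncomputable def qbinom3 (l a b c : ℕ) : Polynomial ℚ :=
  if a + b + c = l then qbinom l a * qbinom (l - a) b else 0

/-- Depth after the first `i` steps: #N − #E. -/
def depth (w : List Step) (i : ℕ) : ℤ :=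
  ((w.take i).count N : ℤ) - (w.take i).count E

/-- `k` (0 ≤ k ≤ l) achieves the maximal running depth. -/
def isMaxDepth (w : List Step) (k : ℕ) : Bool :=
  (List.range (w.length + 1)).all fun i => decide (depth w i ≤ depth w k)

/-- The first index (number of steps) at which the running depth is maximal. -/
def firstDeep (w : List Step) : ℕ :=
  (List.range (w.length + 1)).findIdx (isMaxDepth w)

/-- The last index at which the running depth is maximal. -/
def lastDeep (w : List Step) : ℕ :=
  w.length - (List.range (w.length + 1)).reverse.findIdx (isMaxDepth w)

/-- Replace the first deepest step (the step w_k, k = firstDeep) with E. -/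
def phi (w : List Step) : List Step := w.set (firstDeep w - 1) E

/-- Replace the step following the last deepest point with N. -/
def phiInv (w : List Step) : List Step := w.set (lastDeep w) N

/-- Number of consecutive D's immediately after the first deepest step. -/
def runS (w : List Step) : ℕ := ((w.drop (firstDeep w)).takeWhile (· == D)).length

/-- Number of consecutive D's immediately before the first deepest step. -/
def runR (w : List Step) : ℕ :=
  ((w.take (firstDeep w - 1)).reverse.takeWhile (· == D)).length

/-- The window map: replace W₁ = D^r w_k D^s by D^{r-1} E D^{s+1} if r ≥ 1,
and by D^s E if r = 0. -/
def phiWin (w : List Step) : List Step :=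
  let k := firstDeep w - 1
  let r := runR w
  let s := runS w
  let seg : List Step :=
    if 1 ≤ r then List.replicate (r - 1) D ++ [E] ++ List.replicate (s + 1) D
    else List.replicate s D ++ [E]
  w.take (k - r) ++ seg ++ w.drop (k + s + 1)

/-- 0-based index of the first step after which the path is above the diagonal. -/
def firstAbove (w : List Step) : ℕ :=
  (List.range w.length).findIdx fun i =>
    decide ((w.take (i + 1)).count E < (w.take (i + 1)).count N)

/-- The map ψ of Bonin–Shapiro–Simion: replace with E the last N of the maximal
run of consecutive N's beginning at the first step going above the diagonal. -/
def psi (w : List Step) : List Step :=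
  let i := firstAbove w
  let j := i + ((w.drop i).takeWhile (· == N)).length - 1
  w.set j E

/-!
Since `W` is bad, its maximal depth is positive, so the first deepest step is an `N`.
Turning it into `E` lowers every later depth by two, which makes the point just before it the
last deepest point of `φ(W)`; hence `phiInv` undoes `φ`. Conversely, a path to `(n+1, n-1)` ends
at depth `-2 < 0`, so the step after its last deepest point is an `E`, and turning it into `N`
gives a bad path whose first deepest step is exactly that one.

For `maj`: the step before the first deepest `N` is not `E` (the point before it would be as deep)
and the step after it is not `N` (the point after it would be deeper). For `N < E < D` this
means neither adjacent descent changes when the `N` becomes an `E`.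
-/

namespace Step

def depthInc : Step → ℤ
  | N => 1
  | E => -1
  | D => 0

end Step

section Depth

variable {w : List Step} {i j : ℕ} {x : Step}

lemma sum_map_depthInc (u : List Step) :
    (u.map depthInc).sum = (u.count N : ℤ) - u.count E := by
  induction u with
  | nil => simp
  | cons y u ih => cases y <;> simp [ih, depthInc] <;> ring

lemma depth_eq_sum_take (w : List Step) (i : ℕ) :
    depth w i = ((w.take i).map depthInc).sum := by
  rw [sum_map_depthInc, depth]

@[simp] lemma depth_zero (w : List Step) : depth w 0 = 0 := by simp [depth]

lemma depth_length (w : List Step) : depth w w.length = (w.count N : ℤ) - w.count E := by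
  rw [depth, List.take_length]

lemma depth_succ (hx : w[i]? = some x) : depth w (i + 1) = depth w i + x.depthInc := by
  simp [depth_eq_sum_take, List.take_add_one, hx]

lemma depth_set_of_le (a : Step) (h : i ≤ j) : depth (w.set j a) i = depth w i := by
  rw [depth, depth, List.take_set_of_le h]

lemma depth_set_of_lt (a : Step) (hx : w[j]? = some x) (h : j < i) :
    depth (w.set j a) i = depth w i + a.depthInc - x.depthInc := by
  obtain ⟨hj, rfl⟩ := List.getElem?_eq_some_iff.1 hx
  have hj' : j < (w.take i).length := by simp [hj, h]
  rw [depth_eq_sum_take, depth_eq_sum_take, List.take_set, List.map_set, List.sum_set',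
    dif_pos (by simpa using hj')]
  simp only [List.map_take, List.getElem_take, List.getElem_map]
  ring

lemma eq_N_of_depth_lt_succ (hx : w[i]? = some x) (h : depth w i < depth w (i + 1)) : x = N := by
  rw [depth_succ hx] at h
  cases x <;> simp [depthInc] at h ⊢

lemma eq_E_of_depth_succ_lt (hx : w[i]? = some x) (h : depth w (i + 1) < depth w i) : x = E := by
  rw [depth_succ hx] at h
  cases x <;> simp [depthInc] at h ⊢

end Depth

lemma mem_Words {l : ℕ} {w : List Step} : w ∈ Words l ↔ w.length = l := by
  refine ⟨?_, fun h => ?_⟩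
  · simp only [Words, Finset.mem_image]
    rintro ⟨g, -, rfl⟩
    simp
  · subst h
    exact Finset.mem_image.2 ⟨w.get, Finset.mem_univ _, List.ofFn_get w⟩

lemma mem_DelSet {m n l : ℕ} {w : List Step} :
    w ∈ DelSet m n l ↔
      w.length = l ∧ w.count E + w.count D = m ∧ w.count N + w.count D = n := by
  rw [DelSet, Finset.mem_filter, mem_Words]

lemma bad_iff (w : List Step) : bad w = true ↔ ∃ k ≤ w.length, 0 < depth w k := by
  simp [bad, depth]

lemma List.findIdx_range_eq_iff {p : ℕ → Bool} {m k : ℕ} (hk : k ≤ m) :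
    (List.range (m + 1)).findIdx p = k ↔ p k ∧ ∀ j < k, p j = false := by
  rw [List.findIdx_eq (by simpa using Nat.lt_succ_of_le hk)]
  simp

lemma List.findIdx_range_le {p : ℕ → Bool} {m : ℕ} (h : ∃ k ≤ m, p k) :
    (List.range (m + 1)).findIdx p ≤ m := by
  obtain ⟨k, hk, hp⟩ := h
  have := List.findIdx_lt_length_of_exists (p := p) (xs := List.range (m + 1))
    ⟨k, List.mem_range.2 (Nat.lt_succ_of_le hk), hp⟩
  simpa [Nat.lt_succ_iff] using this

lemma List.reverse_range_succ (m : ℕ) :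
    (List.range (m + 1)).reverse = (List.range (m + 1)).map (m - ·) := by
  simp [List.range_eq_range', List.reverse_range']

lemma List.count_set_add {α : Type*} [BEq α] {l : List α} {j : ℕ} {x : α} (a c : α)
    (hx : l[j]? = some x) : (l.set j a).count c + [x].count c = l.count c + [a].count c := by
  obtain ⟨hj, rfl⟩ := List.getElem?_eq_some_iff.1 hx
  have := List.boole_getElem_le_count (a := c) hj
  simp only [List.count_set hj, List.count_singleton]
  omega

section Deepest

variable {w : List Step} {k : ℕ}

lemma isMaxDepth_iff : isMaxDepth w k = true ↔ ∀ i ≤ w.length, depth w i ≤ depth w k := by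
  simp [isMaxDepth]

lemma isMaxDepth_eq_false_iff (hk : k ≤ w.length) (hmax : ∀ i ≤ w.length, depth w i ≤ depth w k)
    {j : ℕ} : isMaxDepth w j = false ↔ depth w j < depth w k := by
  rw [← Bool.not_eq_true, isMaxDepth_iff]
  push Not
  exact ⟨fun ⟨i, hi, hlt⟩ => hlt.trans_le (hmax i hi), fun h => ⟨k, hk, h⟩⟩

lemma exists_isMaxDepth (w : List Step) : ∃ k ≤ w.length, isMaxDepth w k = true := by
  obtain ⟨k, hk, hmax⟩ := (Finset.range (w.length + 1)).exists_max_image (depth w)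
    ⟨0, by simp⟩
  refine ⟨k, by simpa [Nat.lt_succ_iff] using hk, isMaxDepth_iff.2 fun i hi => ?_⟩
  exact hmax i (by simpa [Nat.lt_succ_iff] using hi)

lemma firstDeep_eq_iff :
    firstDeep w = k ↔ k ≤ w.length ∧ (∀ i ≤ w.length, depth w i ≤ depth w k) ∧
      ∀ j < k, depth w j < depth w k := by
  constructor
  · rintro rfl
    have hle : firstDeep w ≤ w.length := List.findIdx_range_le (exists_isMaxDepth w)
    obtain ⟨hmax, hbefore⟩ := (List.findIdx_range_eq_iff hle).1 rfl
    rw [isMaxDepth_iff] at hmax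
    exact ⟨hle, hmax, fun j hj => (isMaxDepth_eq_false_iff hle hmax).1 (hbefore j hj)⟩
  · rintro ⟨hk, hmax, hbefore⟩
    exact (List.findIdx_range_eq_iff hk).2
      ⟨isMaxDepth_iff.2 hmax, fun j hj => (isMaxDepth_eq_false_iff hk hmax).2 (hbefore j hj)⟩

lemma lastDeep_eq_iff :
    lastDeep w = k ↔ k ≤ w.length ∧ (∀ i ≤ w.length, depth w i ≤ depth w k) ∧
      ∀ j, k < j → j ≤ w.length → depth w j < depth w k := by
  set F := (List.range (w.length + 1)).findIdx fun i => isMaxDepth w (w.length - i) with hF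
  have hlast : lastDeep w = w.length - F := by
    rw [lastDeep, List.reverse_range_succ, List.findIdx_map]
    rfl
  have hFle : F ≤ w.length := by
    obtain ⟨k₀, hk₀, hmax⟩ := exists_isMaxDepth w
    exact List.findIdx_range_le ⟨w.length - k₀, by omega, by simpa [Nat.sub_sub_self hk₀]⟩
  rw [hlast]
  constructor
  · rintro rfl
    obtain ⟨hmax, hafter⟩ := (List.findIdx_range_eq_iff hFle).1 hF.symm
    rw [isMaxDepth_iff] at hmax
    refine ⟨by omega, hmax, fun j hj hjl => (isMaxDepth_eq_false_iff (by omega) hmax).1 ?_⟩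
    simpa [Nat.sub_sub_self hjl] using hafter (w.length - j) (by omega)
  · rintro ⟨hk, hmax, hafter⟩
    have : F = w.length - k := by
      refine (List.findIdx_range_eq_iff (by omega)).2
        ⟨by simpa [Nat.sub_sub_self hk] using isMaxDepth_iff.2 hmax, fun j hj => ?_⟩
      exact (isMaxDepth_eq_false_iff hk hmax).2 (hafter _ (by omega) (by omega))
    omega

lemma firstDeep_spec (w : List Step) :
    firstDeep w ≤ w.length ∧ (∀ i ≤ w.length, depth w i ≤ depth w (firstDeep w)) ∧
      ∀ j < firstDeep w, depth w j < depth w (firstDeep w) :=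
  firstDeep_eq_iff.1 rfl

lemma lastDeep_spec (w : List Step) :
    lastDeep w ≤ w.length ∧ (∀ i ≤ w.length, depth w i ≤ depth w (lastDeep w)) ∧
      ∀ j, lastDeep w < j → j ≤ w.length → depth w j < depth w (lastDeep w) :=
  lastDeep_eq_iff.1 rfl

end Deepest

section Maj

variable {w : List Step} {j : ℕ}

lemma maj_set_eq (rank : Step → ℕ) {a b : Step} (hj : w[j]? = some a)
    (hprev : ∀ i x, i + 1 = j → w[i]? = some x → (rank a < rank x ↔ rank b < rank x))
    (hnext : ∀ y, w[j + 1]? = some y → (rank y < rank a ↔ rank y < rank b)) :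
    maj rank (w.set j b) = maj rank w := by
  have hjl : j < w.length := (List.getElem?_eq_some_iff.1 hj).1
  unfold maj
  rw [List.length_set]
  refine Finset.sum_congr rfl fun i hi => ?_
  rw [Finset.mem_range] at hi
  have hx : w[i]? = some w[i] := List.getElem?_eq_getElem (by omega)
  have hy : w[i + 1]? = some w[i + 1] := List.getElem?_eq_getElem (by omega)
  simp only [List.getD_eq_getElem?_getD, List.getElem?_set, hjl, if_true, hx, hy]
  by_cases h1 : j = i + 1
  · subst h1
    have ha : w[i + 1] = a := by simpa [hy] using hj
    simp [ha, hprev i w[i] rfl hx]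
  by_cases h2 : j = i
  · subst h2
    have ha : w[j] = a := by simpa [hx] using hj
    simp [ha, hnext _ hy]
  · simp [h1, h2]

end Maj

section Phi

variable {w : List Step} {k : ℕ}

lemma exists_firstDeep_eq_succ (hw : bad w = true) : ∃ k, firstDeep w = k + 1 := by
  obtain ⟨i, hi, hpos⟩ := (bad_iff w).1 hw
  obtain ⟨-, hmax, -⟩ := firstDeep_spec w
  refine Nat.exists_eq_add_one.2 (Nat.pos_of_ne_zero fun h0 => ?_)
  have := hmax i hi
  rw [h0, depth_zero] at this
  omega

lemma getElem?_eq_N_of_firstDeep_eq_succ (hk : firstDeep w = k + 1) : w[k]? = some N := by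
  obtain ⟨hle, -, hbefore⟩ := firstDeep_eq_iff.1 hk
  have hx : w[k]? = some w[k] := List.getElem?_eq_getElem (by omega)
  rw [hx, eq_N_of_depth_lt_succ hx (hbefore k (by omega))]

lemma getElem?_ne_E_of_firstDeep_eq_add_two (hk : firstDeep w = k + 2) : w[k]? ≠ some E := by
  intro hE
  obtain ⟨-, -, hbefore⟩ := firstDeep_eq_iff.1 hk
  have h1 := depth_succ hE
  have h2 : depth w (k + 2) = depth w (k + 1) + N.depthInc :=
    depth_succ (getElem?_eq_N_of_firstDeep_eq_succ hk)
  have := hbefore k (by omega)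
  simp only [depthInc] at h1 h2
  omega

lemma getElem?_ne_N_of_firstDeep_eq (hk : firstDeep w = k) : w[k]? ≠ some N := by
  intro hN
  obtain ⟨-, hmax, -⟩ := firstDeep_eq_iff.1 hk
  have hlt : k < w.length := (List.getElem?_eq_some_iff.1 hN).1
  have h1 := depth_succ hN
  have := hmax (k + 1) hlt
  simp only [depthInc] at h1
  omega

lemma phi_eq_set (hk : firstDeep w = k + 1) : phi w = w.set k E := by
  rw [phi, hk, Nat.add_sub_cancel]

lemma lastDeep_phi (hk : firstDeep w = k + 1) : lastDeep (phi w) = k := by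
  obtain ⟨hle, hmax, hbefore⟩ := firstDeep_eq_iff.1 hk
  have hN := getElem?_eq_N_of_firstDeep_eq_succ hk
  have hafter : ∀ i, k < i → depth (w.set k E) i = depth w i - 2 := fun i hi => by
    rw [depth_set_of_lt E hN hi]
    simp only [depthInc]
    ring
  have hdk : depth w (k + 1) = depth w k + 1 := by simpa [depthInc] using depth_succ hN
  rw [phi_eq_set hk, lastDeep_eq_iff, List.length_set, depth_set_of_le E le_rfl]
  refine ⟨by omega, fun i hi => ?_, fun i hki hi => ?_⟩
  · rcases le_or_gt i k with hik | hki
    · rw [depth_set_of_le E hik]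
      have := hbefore i (by omega)
      omega
    · rw [hafter i hki]
      have := hmax i hi
      omega
  · rw [hafter i hki]
    have := hmax i hi
    omega

lemma phiInv_phi (hk : firstDeep w = k + 1) : phiInv (phi w) = w := by
  obtain ⟨hlt, hN⟩ := List.getElem?_eq_some_iff.1 (getElem?_eq_N_of_firstDeep_eq_succ hk)
  rw [phiInv, lastDeep_phi hk, phi_eq_set hk, List.set_set, ← hN, List.set_getElem_self]

lemma maj_phi (rank : Step → ℕ) (hNE : rank N < rank E) (hED : rank E < rank D)
    (hk : firstDeep w = k + 1) : maj rank (phi w) = maj rank w := by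
  rw [phi_eq_set hk]
  refine maj_set_eq rank (getElem?_eq_N_of_firstDeep_eq_succ hk) (fun i x hi hx => ?_)
    (fun y hy => ?_)
  · have hxE : x ≠ E := fun h => getElem?_ne_E_of_firstDeep_eq_add_two (by omega) (h ▸ hx)
    cases x <;> simp_all <;> omega
  · have hyN : y ≠ N := fun h => getElem?_ne_N_of_firstDeep_eq (by omega) (h ▸ hy)
    cases y <;> simp_all <;> omega

lemma phi_mem_DelSet {n l : ℕ} (hw : w ∈ BDelSet n l) : phi w ∈ DelSet (n + 1) (n - 1) l := by
  rw [BDelSet, Finset.mem_filter, mem_DelSet] at hw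
  obtain ⟨⟨hlen, hED, hND⟩, hbad⟩ := hw
  obtain ⟨k, hk⟩ := exists_firstDeep_eq_succ hbad
  have hN := getElem?_eq_N_of_firstDeep_eq_succ hk
  have hE := List.count_set_add E E hN
  have hNN := List.count_set_add E N hN
  have hD := List.count_set_add E D hN
  simp only [List.count_singleton, beq_iff_eq, reduceCtorEq, if_true, if_false] at hE hNN hD
  rw [phi_eq_set hk, mem_DelSet, List.length_set]
  omega

end Phi

section PhiInv

variable {w : List Step}

lemma length_phiInv : (phiInv w).length = w.length := List.length_set ..

lemma lastDeep_lt_length (h : depth w w.length < 0) : lastDeep w < w.length := by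
  obtain ⟨hle, hmax, -⟩ := lastDeep_spec w
  have h0 := hmax 0 (Nat.zero_le _)
  rw [depth_zero] at h0
  refine lt_of_le_of_ne hle fun heq => ?_
  rw [heq] at h0
  omega

lemma getElem?_lastDeep_eq_E (h : depth w w.length < 0) : w[lastDeep w]? = some E := by
  obtain ⟨-, -, hafter⟩ := lastDeep_spec w
  have hlt := lastDeep_lt_length h
  have hx : w[lastDeep w]? = some w[lastDeep w] := List.getElem?_eq_getElem hlt
  rw [hx, eq_E_of_depth_succ_lt hx (hafter _ (by omega) hlt)]

lemma depth_phiInv (h : depth w w.length < 0) (i : ℕ) :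
    depth (phiInv w) i = if i ≤ lastDeep w then depth w i else depth w i + 2 := by
  rw [phiInv]
  split_ifs with hi
  · exact depth_set_of_le N hi
  · rw [depth_set_of_lt N (getElem?_lastDeep_eq_E h) (by omega)]
    simp only [depthInc]
    ring

lemma firstDeep_phiInv (h : depth w w.length < 0) : firstDeep (phiInv w) = lastDeep w + 1 := by
  obtain ⟨-, hmax, hafter⟩ := lastDeep_spec w
  have hlt := lastDeep_lt_length h
  have hK : depth (phiInv w) (lastDeep w + 1) = depth w (lastDeep w) + 1 := by
    have := depth_succ (getElem?_lastDeep_eq_E h)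
    simp only [depthInc] at this
    rw [depth_phiInv h, if_neg (by omega)]
    omega
  rw [firstDeep_eq_iff, length_phiInv, hK]
  refine ⟨hlt, fun i hi => ?_, fun j hj => ?_⟩
  · rw [depth_phiInv h]
    split_ifs with hik
    · have := hmax i hi
      omega
    · have := hafter i (by omega) hi
      omega
  · rw [depth_phiInv h, if_pos (by omega)]
    have := hmax j (by omega)
    omega

lemma phi_phiInv (h : depth w w.length < 0) : phi (phiInv w) = w := by
  obtain ⟨hlt, hE⟩ := List.getElem?_eq_some_iff.1 (getElem?_lastDeep_eq_E h)
  rw [phi_eq_set (firstDeep_phiInv h), phiInv, List.set_set, ← hE, List.set_getElem_self]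

lemma bad_phiInv (h : depth w w.length < 0) : bad (phiInv w) = true := by
  obtain ⟨-, hmax, -⟩ := lastDeep_spec w
  have h0 := hmax 0 (Nat.zero_le _)
  have hK := depth_succ (getElem?_lastDeep_eq_E h)
  rw [depth_zero] at h0
  simp only [depthInc] at hK
  refine (bad_iff _).2 ⟨lastDeep w + 1, ?_, ?_⟩
  · rw [length_phiInv]
    exact lastDeep_lt_length h
  · rw [depth_phiInv h, if_neg (by omega)]
    omega

lemma depth_length_neg_of_mem_DelSet {n l : ℕ} (hw : w ∈ DelSet (n + 1) (n - 1) l) :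
    depth w w.length < 0 := by
  rw [mem_DelSet] at hw
  rw [depth_length]
  omega

lemma phiInv_mem_BDelSet {n l : ℕ} (hn : 1 ≤ n) (hw : w ∈ DelSet (n + 1) (n - 1) l) :
    phiInv w ∈ BDelSet n l := by
  have h := depth_length_neg_of_mem_DelSet hw
  have hE := getElem?_lastDeep_eq_E h
  have hEE := List.count_set_add N E hE
  have hN := List.count_set_add N N hE
  have hD := List.count_set_add N D hE
  simp only [List.count_singleton, beq_iff_eq, reduceCtorEq, if_true, if_false] at hEE hN hD
  rw [mem_DelSet] at hw
  have hmem : w.set (lastDeep w) N ∈ DelSet n n l := by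
    rw [mem_DelSet, List.length_set]
    omega
  exact Finset.mem_filter.2 ⟨hmem, bad_phiInv h⟩

end PhiInv

theorem phi_bijOn_NED_general (n l : ℕ) (hn : 1 ≤ n)
    (rank : Step → ℕ)
    (hNE : rank N < rank E) (hED : rank E < rank D) :
    Set.BijOn phi (BDelSet n l : Set (List Step)) (DelSet (n + 1) (n - 1) l : Set (List Step)) ∧
      ∀ w ∈ BDelSet n l, maj rank w = maj rank (phi w) := by
  have hfirst {w : List Step} (hw : w ∈ BDelSet n l) : ∃ k, firstDeep w = k + 1 :=
    exists_firstDeep_eq_succ (Finset.mem_filter.1 hw).2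
  refine ⟨Set.InvOn.bijOn ⟨fun w hw => ?_, fun w hw => ?_⟩ (fun w hw => phi_mem_DelSet hw)
    (fun w hw => phiInv_mem_BDelSet hn hw), fun w hw => ?_⟩
  · obtain ⟨k, hk⟩ := hfirst hw
    exact phiInv_phi hk
  · exact phi_phiInv (depth_length_neg_of_mem_DelSet hw)
  · obtain ⟨k, hk⟩ := hfirst hw
    exact (maj_phi rank hNE hED hk).symm

/-- for the order N < E < D, replacing the first deepest step of a
bad path with E is a bijection from bad paths in Del(n,n,l) onto
Del(n+1,n-1,l), and maj(W) = maj(φ(W)). -/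
theorem phi_bijOn_NED (n l : ℕ) (hn : 1 ≤ n)
    (rank : Step → ℕ) (hrank : Function.Injective rank)
    (hNE : rank N < rank E) (hED : rank E < rank D) :
    Set.BijOn phi (BDelSet n l : Set (List Step)) (DelSet (n + 1) (n - 1) l : Set (List Step)) ∧
      ∀ w ∈ BDelSet n l, maj rank w = maj rank (phi w) :=
  phi_bijOn_NED_general n l hn rank hNE hED
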